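/- arXiv:1909.05969 — 15 statements merged into one kernel-verified Lean document; each statement's English description precedes it below -/
import Mathlib

section
/- The progress relation ⊣pg is a fix-compliance relation, i.e. F(⊣pg) = ⊣pg. -/
/-- A labelled transition system of contracts: states `U`, visible actions `Act`
partitioned into outputs (`isOut`) and inputs, with a dual involution swapping
inputs and outputs; transitions carry `Option Act` labels (`none` is the
internal action τ); `zero` is the unique state with no outgoing transitions. -/
structure CLTS where
  U : Type
  Act : Type
  isOut : Act → Prop
  dual : Act → Act
  dual_dual : ∀ a, dual (dual a) = a
  dual_flip : ∀ a, isOut (dual a) ↔ ¬ isOut a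
  tr : U → Option Act → U → Prop
  zero : U
  zero_no_trans : ∀ l p', ¬ tr zero l p'
  no_trans_eq_zero : ∀ p, (∀ l p', ¬ tr p l p') → p = zero

namespace CLTS

variable (M : CLTS)

/-- One-step τ-reduction of a client/server pair (τ-transition of `p | q`). -/
def Step (c c' : M.U × M.U) : Prop :=
  (M.tr c.1 none c'.1 ∧ c'.2 = c.2) ∨
  (c'.1 = c.1 ∧ M.tr c.2 none c'.2) ∨
  (∃ a, M.tr c.1 (some a) c'.1 ∧ M.tr c.2 (some (M.dual a)) c'.2)

/-- A pair is stuck if it has no one-step τ-reduction. -/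
def Stuck (c : M.U × M.U) : Prop := ∀ c', ¬ M.Step c c'

/-- Reflexive-transitive closure of one-step τ-reduction. -/
def Steps : M.U × M.U → M.U × M.U → Prop := Relation.ReflTransGen M.Step

/-- Successful pairs: the client has terminated. -/
def Succ : Set (M.U × M.U) := {c | c.1 = M.zero}

/-- The compliance functional. -/
def F (x : Set (M.U × M.U)) : Set (M.U × M.U) :=
  M.Succ ∪ {c | ¬ M.Stuck c ∧ ∀ c', M.Step c c' → c' ∈ x}

/-- Progress compliance. -/
def Pg (p q : M.U) : Prop :=
  ∀ p' q', M.Steps (p, q) (p', q') → M.Stuck (p', q') → p' = M.zero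

/-- Progress compliance, as a set of pairs. -/
def pgRel : Set (M.U × M.U) := {c | M.Pg c.1 c.2}

/-- Must-testing compliance: every maximal τ-trace (encoded as a sequence which,
once stuck, stays put) reaches a successful pair. -/
def Mst (p q : M.U) : Prop :=
  ∀ s : ℕ → M.U × M.U, s 0 = (p, q) →
    (∀ n, M.Step (s n) (s (n + 1)) ∨ (M.Stuck (s n) ∧ s (n + 1) = s n)) →
    ∃ i, (s i).1 = M.zero

/-- Must-testing compliance, as a set of pairs. -/
def mstRel : Set (M.U × M.U) := {c | M.Mst c.1 c.2}

/-- Should-testing compliance. -/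
def Shd (p q : M.U) : Prop :=
  ∀ p' q', M.Steps (p, q) (p', q') → ∃ q'', M.Steps (p', q') (M.zero, q'')

/-- Should-testing compliance, as a set of pairs. -/
def shdRel : Set (M.U × M.U) := {c | M.Shd c.1 c.2}

/-- τ-transition on single states. -/
def TauStep (r r' : M.U) : Prop := M.tr r none r'

/-- Reflexive-transitive closure of τ-transitions on single states. -/
def TauSteps : M.U → M.U → Prop := Relation.ReflTransGen M.TauStep

/-- `r` may diverge: it has an infinite internal computation. -/
def Diverges (r : M.U) : Prop :=
  ∃ s : ℕ → M.U, s 0 = r ∧ ∀ n, M.TauStep (s n) (s (n + 1))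

/-- Behavioural compliance. -/
def Beh (p q : M.U) : Prop :=
  ∀ p' q', M.Steps (p, q) (p', q') →
    (M.Stuck (p', q') → p' = M.zero) ∧ (M.Diverges q' → M.TauSteps p' M.zero)

/-- Behavioural compliance, as a set of pairs. -/
def behRel : Set (M.U × M.U) := {c | M.Beh c.1 c.2}

/-- Weak barb on a visible action. -/
def WBarb (p : M.U) (a : M.Act) : Prop :=
  ∃ p₁ p₂, M.TauSteps p p₁ ∧ M.tr p₁ (some a) p₂

/-- I/O compliance. -/
def Io (p q : M.U) : Prop :=
  ∀ p' q', M.Steps (p, q) (p', q') →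
    (∀ a, M.isOut a → M.WBarb p' a → M.WBarb q' (M.dual a)) ∧
    (((¬ ∃ a, M.isOut a ∧ M.WBarb p' a) ∧ (∃ a, ¬ M.isOut a ∧ M.WBarb p' a)) →
      ((∃ a, M.isOut a ∧ M.WBarb q' a) ∧
       ∀ a, M.isOut a → M.WBarb q' a → M.WBarb p' (M.dual a)))

/-- I/O compliance, as a set of pairs. -/
def ioRel : Set (M.U × M.U) := {c | M.Io c.1 c.2}

/-- May-testing compliance. -/
def May (p q : M.U) : Prop := ∃ q', M.Steps (p, q) (M.zero, q')

/-- May-testing compliance, as a set of pairs. -/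
def mayRel : Set (M.U × M.U) := {c | M.May c.1 c.2}

end CLTS


lemma zero_first_of_steps (M : CLTS) {c c' : M.U × M.U}
    (h : M.Steps c c') (hz : c.1 = M.zero) : c'.1 = M.zero := by
  induction h with
  | refl => exact hz
  | tail _ hstep ih =>
    rcases hstep with ⟨ht, _⟩ | ⟨he, _⟩ | ⟨a, ht, _⟩
    · exact absurd ht (by rw [ih] at ht ⊢; exact M.zero_no_trans _ _)
    · exact he.trans ih
    · rw [ih] at ht; exact absurd ht (M.zero_no_trans _ _)

/-- progress is a fix-compliance relation. -/
theorem pg_fix_compliance (M : CLTS) : M.F M.pgRel = M.pgRel := by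
  ext c
  constructor
  · rintro (hz | ⟨hns, hall⟩)
    · intro p' q' hsteps _
      exact zero_first_of_steps M hsteps hz
    · intro p' q' hsteps hstuck
      rcases hsteps.cases_head with
        heq | ⟨c'', hstep, hrest⟩
      · exact absurd (heq ▸ hstuck) (by simpa using hns)
      · exact hall c'' hstep p' q' hrest hstuck
  · intro hpg
    by_cases hs : M.Stuck c
    · left
      exact hpg c.1 c.2 Relation.ReflTransGen.refl hs
    · right
      refine ⟨hs, fun c' hstep p' q' hsteps hstuck => ?_⟩
      exact hpg p' q' (Relation.ReflTransGen.head hstep hsteps) hstuck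
end

section
/- The progress relation ⊣pg is the largest fix-compliance relation: F(⊣pg) = ⊣pg, and every relation x ⊆ U × U with x ⊆ F(x) (in particular every fixed point of F) satisfies x ⊆ ⊣pg. -/
private lemma step_zero (M : CLTS) {c c' : M.U × M.U} (h0 : c.1 = M.zero)
    (h : M.Step c c') : c'.1 = M.zero := by
  rcases h with ⟨h, _⟩ | ⟨h, _⟩ | ⟨a, h, _⟩
  · exact absurd h (h0 ▸ M.zero_no_trans _ _)
  · exact h.trans h0
  · exact absurd h (h0 ▸ M.zero_no_trans _ _)

/-- progress is the largest fix-compliance relation. -/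
theorem pg_largest_fix_compliance (M : CLTS) :
    M.F M.pgRel = M.pgRel ∧ ∀ x : Set (M.U × M.U), x ⊆ M.F x → x ⊆ M.pgRel := by
  have coind : ∀ x : Set (M.U × M.U), x ⊆ M.F x → x ⊆ M.pgRel := by
    intro x hx c hc
    intro p' q' hsteps hstuck
    -- invariant along steps: in x or client is zero
    have inv : ∀ d : M.U × M.U, M.Steps c d → d ∈ x ∨ d.1 = M.zero := by
      intro d hd
      induction hd with
      | refl => exact Or.inl hc
      | tail hab hbc ih =>
        rcases ih with h | h
        · rcases hx h with h' | h'
          · exact Or.inr (step_zero M h' hbc)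
          · exact Or.inl (h'.2 _ hbc)
        · exact Or.inr (step_zero M h hbc)
    rcases inv (p', q') hsteps with h | h
    · rcases hx h with h' | h'
      · exact h'
      · exact absurd hstuck (by intro hs; exact h'.1 hs)
    · exact h
  constructor
  · apply Set.Subset.antisymm
    · -- F(pg) ⊆ pg : use coinduction with x = F(pg), need F(pg) ⊆ F(F(pg))
      -- easier: prove directly
      intro c hc p' q' hsteps hstuck
      rcases hc with h | ⟨hns, hsucc⟩
      · -- c.1 = zero; all reachable have client zero
        have : ∀ d, M.Steps c d → d.1 = M.zero := by
          intro d hd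
          induction hd with
          | refl => exact h
          | tail hab hbc ih => exact step_zero M ih hbc
        exact this _ hsteps
      · rcases (Relation.ReflTransGen.cases_head hsteps) with h | ⟨b, hb, hb'⟩
        · exact absurd hstuck (by rw [← h]; intro hs; exact hns hs)
        · exact hsucc _ hb _ _ hb' hstuck
    · -- pg ⊆ F(pg)
      intro c hc
      by_cases hs : M.Stuck c
      · exact Or.inl (hc c.1 c.2 Relation.ReflTransGen.refl (by simpa using hs))
      · refine Or.inr ⟨hs, fun c' hc' p' q' hst hstk => ?_⟩
        exact hc p' q' (Relation.ReflTransGen.head hc' hst) hstk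
  · exact coind
end

section
/- Every post-compliance relation enjoys the progress property: if x ⊆ U × U satisfies x ⊆ F(x), then for all (p,q) ∈ x, every pair (p',q') with (p,q) ⇒* (p',q') that is stuck has p' = 0. -/
/-- every post-compliance relation enjoys the progress property. -/
theorem post_compliance_progress (M : CLTS) (x : Set (M.U × M.U)) (hx : x ⊆ M.F x) :
    ∀ p q : M.U, (p, q) ∈ x →
      ∀ p' q' : M.U, M.Steps (p, q) (p', q') → M.Stuck (p', q') → p' = M.zero := by
  intro p q hpq p' q' hsteps hstuck
  have key : ∀ c c', M.Steps c c' → c ∈ x ∨ c.1 = M.zero → c' ∈ x ∨ c'.1 = M.zero := by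
    intro c c' h
    induction h with
    | refl => exact id
    | tail _ hstep ih =>
      intro hc
      rcases ih hc with hmem | hz
      · rcases hx hmem with hS | ⟨_, hall⟩
        · right
          rcases hstep with ⟨ht, _⟩ | ⟨he, _⟩ | ⟨a, ht, _⟩
          · exact absurd ht (by rw [hS] at *; exact M.zero_no_trans none _)
          · rw [he]; exact hS
          · exact absurd ht (by rw [hS] at *; exact M.zero_no_trans (some a) _)
        · exact Or.inl (hall _ hstep)
      · right
        rcases hstep with ⟨ht, _⟩ | ⟨he, _⟩ | ⟨a, ht, _⟩
        · exact absurd ht (by rw [hz] at *; exact M.zero_no_trans none _)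
        · rw [he]; exact hz
        · exact absurd ht (by rw [hz] at *; exact M.zero_no_trans (some a) _)
  rcases key _ _ hsteps (Or.inl hpq) with hmem | hz
  · rcases hx hmem with hS | ⟨hns, _⟩
    · exact hS
    · exact absurd hstuck hns
  · exact hz
end

section
/- The must-testing compliance relation ⊣mst is a pre-fixed point of the compliance functional: F(⊣mst) ⊆ ⊣mst. -/
/-- must-testing compliance is a pre-fixed point of the compliance functional. -/
theorem mst_pre_compliance (M : CLTS) : M.F M.mstRel ⊆ M.mstRel := by
  rintro ⟨p, q⟩ (h | ⟨hns, hall⟩)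
  · intro s hs0 _
    exact ⟨0, by rw [hs0]; exact h⟩
  · intro s hs0 hstep
    rcases hstep 0 with hst | ⟨hstuck, _⟩
    · have h1 : M.Step (p, q) (s 1) := by rwa [hs0] at hst
      have := hall (s 1) h1 (fun n => s (n + 1)) rfl (fun n => hstep (n + 1))
      rcases this with ⟨i, hi⟩
      exact ⟨i + 1, hi⟩
    · exact absurd (by rwa [hs0] at hstuck) hns
end

section
/- The must-testing compliance relation ⊣mst is contained in every pre-fixed point of the compliance functional: if x ⊆ U × U satisfies F(x) ⊆ x, then ⊣mst ⊆ x. -/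
/-- must-testing compliance is contained in every pre-fixed point of F. -/
theorem mst_least_pre (M : CLTS) (x : Set (M.U × M.U)) (hx : M.F x ⊆ x) :
    M.mstRel ⊆ x := by
  intro c hc
  by_contra hcx
  -- from c ∉ x, get c ∉ F x
  have key : ∀ d : M.U × M.U, d ∉ x →
      d.1 ≠ M.zero ∧ (M.Stuck d ∨ ∃ d', M.Step d d' ∧ d' ∉ x) := by
    intro d hd
    have hdF : d ∉ M.F x := fun h => hd (hx h)
    have h1 : d ∉ M.Succ := fun h => hdF (Or.inl h)
    have h2 : ¬ (¬ M.Stuck d ∧ ∀ d', M.Step d d' → d' ∈ x) := fun h => hdF (Or.inr h)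
    refine ⟨h1, ?_⟩
    by_cases hs : M.Stuck d
    · exact Or.inl hs
    · right
      by_contra hno
      push_neg at hno
      exact h2 ⟨hs, fun d' hst => by
        by_contra hd'
        exact hd' (by
          have := hno d' hst
          exact absurd this (by simp_all))⟩
  -- successor function on pairs outside x
  let T := {d : M.U × M.U // d ∉ x}
  have next : ∀ d : T, ∃ d' : T, M.Step d.1 d'.1 ∨ (M.Stuck d.1 ∧ d'.1 = d.1) := by
    rintro ⟨d, hd⟩
    rcases (key d hd).2 with hs | ⟨d', hst, hd'⟩
    · exact ⟨⟨d, hd⟩, Or.inr ⟨hs, rfl⟩⟩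
    · exact ⟨⟨d', hd'⟩, Or.inl hst⟩
  choose f hf using next
  -- build the trace
  let s : ℕ → T := fun n => f^[n] ⟨c, hcx⟩
  have hstep : ∀ n, M.Step (s n).1 (s (n+1)).1 ∨ (M.Stuck (s n).1 ∧ (s (n+1)).1 = (s n).1) := by
    intro n
    have : s (n+1) = f (s n) := Function.iterate_succ_apply' f n _
    rw [this]
    exact hf (s n)
  have hmst : M.Mst c.1 c.2 := hc
  obtain ⟨i, hi⟩ := hmst (fun n => (s n).1) (by simp [s]) hstep
  exact ((key (s i).1 (s i).2).1) hi
end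

section
/- The must-testing compliance relation ⊣mst is the least fix-compliance relation: F(⊣mst) = ⊣mst, and every relation x ⊆ U × U with F(x) = x satisfies ⊣mst ⊆ x. -/
namespace CLTSAux

open CLTS

/-- The well-founded part of the compliance functional: least prefixpoint. -/
inductive W (M : CLTS) : M.U × M.U → Prop
  | succ : ∀ c : M.U × M.U, c.1 = M.zero → W M c
  | step : ∀ c : M.U × M.U, ¬ M.Stuck c → (∀ c', M.Step c c' → W M c') → W M c

theorem W_least (M : CLTS) (x : Set (M.U × M.U)) (hx : M.F x ⊆ x) :
    ∀ c, W M c → c ∈ x := by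
  intro c hc
  induction hc with
  | succ c h => exact hx (Or.inl h)
  | step c hns _ ih => exact hx (Or.inr ⟨hns, ih⟩)

theorem W_subset_mst (M : CLTS) : ∀ c, W M c → c ∈ M.mstRel := by
  intro c hc
  induction hc with
  | succ c h =>
    intro s hs0 _
    exact ⟨0, by rw [hs0]; exact h⟩
  | step c hns hstep ih =>
    intro s hs0 hs
    rcases hs 0 with h | ⟨hstk, _⟩
    · rw [hs0] at h
      have h1 : (s 1) ∈ M.mstRel := ih _ h
      have := h1 (fun n => s (n + 1)) (by simp) (fun n => hs (n + 1))
      rcases this with ⟨i, hi⟩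
      exact ⟨i + 1, hi⟩
    · rw [hs0] at hstk; exact absurd hstk hns

theorem mst_subset_W (M : CLTS) : ∀ c, c ∈ M.mstRel → W M c := by
  intro c hc
  by_contra hW
  -- from ¬ W and ¬ success, we can either be stuck or move to another ¬ W state
  have key : ∀ d : {d : M.U × M.U // ¬ W M d}, ¬ M.Stuck d.1 →
      ∃ d' : {d : M.U × M.U // ¬ W M d}, M.Step d.1 d'.1 := by
    rintro ⟨d, hd⟩ hns
    by_contra h
    push_neg at h
    apply hd
    exact W.step d hns (fun c' hc' => by
      by_contra hw
      exact h ⟨c', hw⟩ hc')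
  classical
  let g : {d : M.U × M.U // ¬ W M d} → {d : M.U × M.U // ¬ W M d} := fun d =>
    if h : M.Stuck d.1 then d else Classical.choose (key d h)
  let s : ℕ → {d : M.U × M.U // ¬ W M d} := fun n => g^[n] ⟨c, hW⟩
  have hs0 : (fun n => (s n).1) 0 = (c.1, c.2) := by simp [s]
  have hstep : ∀ n, M.Step ((s n).1) ((s (n+1)).1) ∨
      (M.Stuck ((s n).1) ∧ (s (n+1)).1 = (s n).1) := by
    intro n
    have hsucc : s (n+1) = g (s n) := Function.iterate_succ_apply' g n _
    by_cases h : M.Stuck (s n).1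
    · right
      refine ⟨h, ?_⟩
      rw [hsucc]; simp only [g, dif_pos h]
    · left
      rw [hsucc]
      simp only [g, dif_neg h]
      exact Classical.choose_spec (key (s n) h)
  have hmst := hc (fun n => (s n).1) hs0 hstep
  rcases hmst with ⟨i, hi⟩
  exact (s i).2 (W.succ _ hi)

theorem mst_eq_W (M : CLTS) : M.mstRel = {c | W M c} :=
  Set.ext fun c => ⟨mst_subset_W M c, W_subset_mst M c⟩

end CLTSAux

/-- must-testing compliance is the least fix-compliance relation. -/
theorem mst_least_fix_compliance (M : CLTS) :
    M.F M.mstRel = M.mstRel ∧ ∀ x : Set (M.U × M.U), M.F x = x → M.mstRel ⊆ x := by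
  have hW : M.mstRel = {c | CLTSAux.W M c} := CLTSAux.mst_eq_W M
  constructor
  · apply Set.eq_of_subset_of_subset
    · -- F(W) ⊆ W
      rw [hW]
      rintro c (h | ⟨hns, hstep⟩)
      · exact CLTSAux.W.succ c h
      · exact CLTSAux.W.step c hns hstep
    · -- W ⊆ F(W)
      rw [hW]
      intro c hc
      cases hc with
      | succ c h => exact Or.inl h
      | step c hns hstep => exact Or.inr ⟨hns, hstep⟩
  · intro x hx
    rw [hW]
    exact fun c hc => CLTSAux.W_least M x (le_of_eq hx) c hc
end

section
/- The should-testing compliance relation ⊣shd is a fix-compliance relation, i.e. F(⊣shd) = ⊣shd. -/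
namespace CLTS

variable {M : CLTS}

/-- Since `0` has no transitions, only the server can move once the client has terminated. -/
lemma Steps.fst_eq_zero {c c' : M.U × M.U} (h : M.Steps c c') (hc : c.1 = M.zero) :
    c'.1 = M.zero := by
  induction h with
  | refl => exact hc
  | tail _ hs ih =>
    rcases hs with ⟨ht, _⟩ | ⟨he, _⟩ | ⟨_, ht, _⟩
    · exact absurd (ih ▸ ht) (M.zero_no_trans _ _)
    · rw [he, ih]
    · exact absurd (ih ▸ ht) (M.zero_no_trans _ _)

lemma shd_of_mem_succ {p q : M.U} (h : (p, q) ∈ M.Succ) : M.Shd p q :=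
  fun p' q' hs => ⟨q', (Steps.fst_eq_zero hs h : p' = M.zero) ▸ Relation.ReflTransGen.refl⟩

lemma Shd.of_step {p q p' q' : M.U} (h : M.Shd p q) (hs : M.Step (p, q) (p', q')) :
    M.Shd p' q' :=
  fun p'' q'' hs' => h p'' q'' (Relation.ReflTransGen.head hs hs')

lemma shd_of_forall_step {p q : M.U} (hns : ¬ M.Stuck (p, q))
    (h : ∀ c', M.Step (p, q) c' → M.Shd c'.1 c'.2) : M.Shd p q := by
  intro p' q' hs
  rcases hs.cases_head with heq | ⟨c, hc, hs'⟩
  · obtain ⟨c, hc⟩ : ∃ c, M.Step (p, q) c := by simpa [Stuck] using hns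
    obtain ⟨q'', hq''⟩ := h c hc c.1 c.2 Relation.ReflTransGen.refl
    exact ⟨q'', heq ▸ Relation.ReflTransGen.head hc hq''⟩
  · exact h c hc p' q' hs'

lemma Shd.not_stuck {p q : M.U} (h : M.Shd p q) (hp : p ≠ M.zero) : ¬ M.Stuck (p, q) := by
  intro hstuck
  obtain ⟨q'', hq''⟩ := h p q Relation.ReflTransGen.refl
  rcases hq''.cases_head with heq | ⟨c, hc, _⟩
  · exact hp (congrArg Prod.fst heq)
  · exact hstuck c hc

end CLTS

/-- should-testing compliance is a fix-compliance relation. -/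
theorem shd_fix_compliance (M : CLTS) : M.F M.shdRel = M.shdRel := by
  ext ⟨p, q⟩
  constructor
  · rintro (hsucc | ⟨hns, hstep⟩)
    · exact CLTS.shd_of_mem_succ hsucc
    · exact CLTS.shd_of_forall_step hns hstep
  · intro hshd
    by_cases hp : p = M.zero
    · exact Or.inl hp
    · exact Or.inr ⟨hshd.not_stuck hp, fun _ hs => CLTS.Shd.of_step hshd hs⟩
end

section
/- The behavioural compliance relation ⊣beh is a fix-compliance relation, i.e. F(⊣beh) = ⊣beh. -/
/-- behavioural compliance is a fix-compliance relation. -/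
theorem beh_fix_compliance (M : CLTS) : M.F M.behRel = M.behRel := by
  have zero_steps : ∀ c c' : M.U × M.U, M.Steps c c' → c.1 = M.zero → c'.1 = M.zero := by
    intro c c' h
    induction h with
    | refl => exact id
    | tail _ hstep ih =>
      intro hc
      have hb := ih hc
      rcases hstep with ⟨h1, _⟩ | ⟨h1, _⟩ | ⟨a, h1, _⟩
      · rw [hb] at h1; exact absurd h1 (M.zero_no_trans _ _)
      · rw [h1, hb]
      · rw [hb] at h1; exact absurd h1 (M.zero_no_trans _ _)
  ext ⟨p, q⟩
  constructor
  · rintro (hsucc | ⟨hns, hall⟩)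
    · intro p' q' hsteps
      have hp' : p' = M.zero := zero_steps _ _ hsteps hsucc
      subst hp'
      exact ⟨fun _ => rfl, fun _ => Relation.ReflTransGen.refl⟩
    · intro p' q' hsteps
      rcases Relation.ReflTransGen.cases_head hsteps with heq | ⟨c₁, hstep, hrest⟩
      · injection heq with hp hq
        subst hp; subst hq
        constructor
        · intro hst; exact absurd hst hns
        · rintro ⟨s, hs0, hsτ⟩
          have hstep : M.Step (p, q) (p, s 1) := by
            right; left
            exact ⟨rfl, show M.tr q none (s 1) by have h0 := hsτ 0; rw [hs0] at h0; exact h0⟩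
          exact (hall _ hstep p (s 1) Relation.ReflTransGen.refl).2
            ⟨fun n => s (n + 1), rfl, fun n => hsτ (n + 1)⟩
      · exact hall c₁ hstep p' q' hrest
  · intro hbeh
    by_cases hz : p = M.zero
    · exact Or.inl hz
    · refine Or.inr ⟨fun hst => hz ((hbeh p q Relation.ReflTransGen.refl).1 hst), ?_⟩
      intro c' hstep p' q' hsteps
      exact hbeh p' q' (Relation.ReflTransGen.head hstep (by rwa [← Prod.mk.eta (p := c')]))
end

section
/- The I/O compliance relation ⊣io is a post-compliance relation, i.e. ⊣io ⊆ F(⊣io). -/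
/-- I/O compliance is a post-compliance relation. -/
theorem io_post_compliance (M : CLTS) : M.ioRel ⊆ M.F M.ioRel := by
  rintro ⟨p, q⟩ hio
  by_cases hz : p = M.zero
  · exact Or.inl hz
  · right
    refine ⟨?_, ?_⟩
    · intro hstuck
      have hpτ : ∀ p', ¬ M.tr p none p' := fun p' h =>
        hstuck (p', q) (Or.inl ⟨h, rfl⟩)
      have hqτ : ∀ q', ¬ M.tr q none q' := fun q' h =>
        hstuck (p, q') (Or.inr (Or.inl ⟨rfl, h⟩))
      have hsync : ∀ a p' q', M.tr p (some a) p' → M.tr q (some (M.dual a)) q' → False :=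
        fun a p' q' h1 h2 => hstuck (p', q') (Or.inr (Or.inr ⟨a, h1, h2⟩))
      have hbarbp : ∀ a, M.WBarb p a → ∃ p₂, M.tr p (some a) p₂ := by
        rintro a ⟨p₁, p₂, hsteps, htr⟩
        rcases hsteps.cases_head with h | ⟨c, hc, _⟩
        · exact ⟨p₂, h ▸ htr⟩
        · exact absurd hc (hpτ c)
      have hbarbq : ∀ a, M.WBarb q a → ∃ q₂, M.tr q (some a) q₂ := by
        rintro a ⟨q₁, q₂, hsteps, htr⟩
        rcases hsteps.cases_head with h | ⟨c, hc, _⟩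
        · exact ⟨q₂, h ▸ htr⟩
        · exact absurd hc (hqτ c)
      obtain ⟨h1, h2⟩ := hio p q Relation.ReflTransGen.refl
      -- p ≠ zero means p has some transition
      have hex : ∃ l p', M.tr p l p' := by
        by_contra h
        push_neg at h
        exact hz (M.no_trans_eq_zero p h)
      obtain ⟨l, p', hpl⟩ := hex
      obtain ⟨a, rfl⟩ : ∃ a, l = some a := by
        cases l with
        | none => exact absurd hpl (hpτ p')
        | some a => exact ⟨a, rfl⟩
      have hwpa : M.WBarb p a := ⟨p, p', Relation.ReflTransGen.refl, hpl⟩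
      by_cases hb : ∃ a, M.isOut a ∧ M.WBarb p a
      · obtain ⟨b, hbo, hwb⟩ := hb
        obtain ⟨p₂, hp⟩ := hbarbp b hwb
        obtain ⟨q₂, hq⟩ := hbarbq _ (h1 b hbo hwb)
        exact hsync b p₂ q₂ hp hq
      · have hin : ∃ a, ¬ M.isOut a ∧ M.WBarb p a := by
          refine ⟨a, fun hOut => hb ⟨a, hOut, hwpa⟩, hwpa⟩
        obtain ⟨⟨b, hbo, hwq⟩, h3⟩ := h2 ⟨hb, hin⟩
        obtain ⟨q₂, hq⟩ := hbarbq b hwq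
        obtain ⟨p₂, hp⟩ := hbarbp _ (h3 b hbo hwq)
        refine hsync (M.dual b) p₂ q₂ hp ?_
        rw [M.dual_dual]; exact hq
    · rintro ⟨p₁, q₁⟩ hstep p' q' hsteps
      exact hio p' q' (Relation.ReflTransGen.head hstep hsteps)
end

section
/- The may-testing compliance relation ⊣may is a pre-compliance relation, i.e. F(⊣may) ⊆ ⊣may. -/
/-- may-testing compliance is a pre-compliance relation. -/
theorem may_pre_compliance (M : CLTS) : M.F M.mayRel ⊆ M.mayRel := by
  rintro ⟨p, q⟩ (h | ⟨hns, hall⟩)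
  · exact ⟨q, by simp only [CLTS.Succ, Set.mem_setOf_eq] at h; rw [← h]; exact Relation.ReflTransGen.refl⟩
  · simp only [CLTS.Stuck, not_forall, not_not] at hns
    obtain ⟨c', hstep⟩ := hns
    obtain ⟨q', hq'⟩ := hall c' hstep
    exact ⟨q', Relation.ReflTransGen.head hstep hq'⟩
end

section
/- I/O compliance is not in general a pre-compliance relation: there exist a type U, a set of visible actions with dual involution, a transition relation, and a distinguished state 0 satisfying the standing assumptions, together with contracts p, q ∈ U, such that (p,q) ∈ F(⊣io) but not p ⊣io q. (A witness: p with two outgoing transitions !a and !b each leading to 0, and q with a single transition ?a leading to 0.) -/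
/-- Witness transition relation: state 1 outputs `a` (= (true,false)) and `b`
(= (true,true)) to 0; state 2 inputs `a` (= (false,false)) to 0. -/
def myTr (s : Fin 3) (l : Option (Bool × Bool)) (t : Fin 3) : Prop :=
  (s = 1 ∧ t = 0 ∧ (l = some (true, false) ∨ l = some (true, true))) ∨
  (s = 2 ∧ t = 0 ∧ l = some (false, false))

abbrev M : CLTS where
  U := Fin 3
  Act := Bool × Bool
  isOut a := a.1 = true
  dual a := (!a.1, a.2)
  dual_dual a := by simp
  dual_flip a := by simp
  tr := myTr
  zero := 0
  zero_no_trans l p' := by simp [myTr]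
  no_trans_eq_zero p h := by
    fin_cases p
    · rfl
    · exact absurd (Or.inl ⟨rfl, rfl, Or.inl rfl⟩ : myTr 1 (some (true, false)) 0)
        (h _ _)
    · exact absurd (Or.inr ⟨rfl, rfl, rfl⟩ : myTr 2 (some (false, false)) 0) (h _ _)

lemma no_tau : ∀ s t : M.U, ¬ M.TauStep s t := by
  rintro s t (⟨_, _, h | h⟩ | ⟨_, _, h⟩) <;> simp at h

lemma tauSteps_eq {s t : M.U} (h : M.TauSteps s t) : s = t := by
  induction h with
  | refl => rfl
  | tail _ h _ => exact absurd h (no_tau _ _)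

lemma step_zero_s11 : ∀ c', ¬ M.Step (0, 0) c' := by
  rintro c' (⟨h, -⟩ | ⟨-, h⟩ | ⟨a, h, -⟩) <;>
    exact M.zero_no_trans _ _ h

lemma steps_zero {c'} (h : M.Steps (0, 0) c') : c' = (0, 0) := by
  induction h with
  | refl => rfl
  | tail _ h ih => exact absurd (ih ▸ h) (step_zero_s11 _)

lemma io_zero : M.Io 0 0 := by
  intro p' q' h
  obtain ⟨h1, h2⟩ := Prod.mk.injEq .. ▸ steps_zero h
  subst h1; subst h2
  constructor
  · rintro a _ ⟨p₁, p₂, ht, htr⟩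
    exact absurd ((tauSteps_eq ht) ▸ htr) (M.zero_no_trans _ _)
  · rintro ⟨-, a, -, p₁, p₂, ht, htr⟩
    exact absurd ((tauSteps_eq ht) ▸ htr) (M.zero_no_trans _ _)

lemma step_pq {c'} (h : M.Step (1, 2) c') : c' = (0, 0) := by
  obtain ⟨h, -⟩ | ⟨-, h⟩ | ⟨a, h1, h2⟩ := h
  · exact absurd h (no_tau _ _)
  · exact absurd h (no_tau _ _)
  · obtain ⟨-, e1, ha | ha⟩ | ⟨e, -, -⟩ := h1
    · obtain ⟨-, e2, hb⟩ | ⟨-, e2, hb⟩ := h2 <;>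
        simp_all [Prod.ext_iff]
    · obtain ⟨-, e2, hb⟩ | ⟨-, e2, hb⟩ := h2 <;>
        simp_all [Prod.ext_iff]
    · exact absurd e (by decide)

/-- I/O compliance is not in general a pre-compliance relation. -/
theorem io_not_pre_compliance :
    ∃ (M : CLTS) (p q : M.U), (p, q) ∈ M.F M.ioRel ∧ ¬ M.Io p q := by
  refine ⟨M, 1, 2, ?_, ?_⟩
  · right
    constructor
    · intro hst
      exact hst (0, 0) (Or.inr (Or.inr ⟨(true, false),
        Or.inl ⟨rfl, rfl, Or.inl rfl⟩, Or.inr ⟨rfl, rfl, by rfl⟩⟩))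
    · intro c' hc'
      rw [step_pq hc']
      exact io_zero
  · intro h
    have := (h 1 2 Relation.ReflTransGen.refl).1 (true, true) rfl
      ⟨1, 0, Relation.ReflTransGen.refl, Or.inl ⟨rfl, rfl, Or.inr rfl⟩⟩
    obtain ⟨p₁, p₂, ht, htr⟩ := this
    rw [← tauSteps_eq ht] at htr
    obtain ⟨e, -⟩ | ⟨-, -, e⟩ := htr
    · exact absurd e (by decide)
    · simp [CLTS.dual, M] at e
end

section
/- May-testing compliance is not in general a post-compliance relation: there exist a type U, a set of visible actions with dual involution, a transition relation, and a distinguished state 0 satisfying the standing assumptions, together with contracts p, q ∈ U, such that p ⊣may q but (p,q) ∉ F(⊣may). (A witness: p with transitions !a to 0 and !b to a state that can only perform ?c, and q with transitions ?a to 0 and ?b to 0.) -/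
/-!
The client `!a.0 + !b.?c` and the server `?a.0 + ?b.0` may succeed by synchronising on `a`, so
they are may-compliant. But synchronising on `b` leads to the pair `(?c, 0)`, which is stuck with
an unterminated client; this reduct is not may-compliant, so `(p, q)` is not in `F(⊣may)`.
-/

namespace CLTS

variable {M : CLTS}

theorem may_of_step {p q q' : M.U} (h : M.Step (p, q) (M.zero, q')) : M.May p q :=
  ⟨q', .single h⟩

theorem stuck_of_no_tau_of_right_zero {p : M.U} (hp : ∀ p', ¬ M.tr p none p') : M.Stuck (p, M.zero) := by
  rintro c' (⟨h, -⟩ | ⟨-, h⟩ | ⟨a, -, h⟩)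
  · exact hp _ h
  · exact M.zero_no_trans _ _ h
  · exact M.zero_no_trans _ _ h

theorem Stuck.steps_eq {c c' : M.U × M.U} (hc : M.Stuck c) (h : M.Steps c c') : c' = c := by
  induction h with
  | refl => rfl
  | tail _ hstep ih => exact absurd (ih ▸ hstep) (hc _)

theorem Stuck.not_may {p q : M.U} (hc : M.Stuck (p, q)) (hp : p ≠ M.zero) : ¬ M.May p q :=
  fun ⟨_, h⟩ => hp (congrArg Prod.fst (hc.steps_eq h)).symm

theorem not_mem_F_mayRel_of_step {c c' : M.U × M.U} (hc : c.1 ≠ M.zero) (h : M.Step c c')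
    (h' : ¬ M.May c'.1 c'.2) : c ∉ M.F M.mayRel := by
  rintro (hsucc | ⟨-, hall⟩)
  · exact hc hsucc
  · exact h' (hall c' h)

end CLTS

namespace MayCounterexample

inductive Chan
  | a | b | c

inductive Act
  | inp (ch : Chan)
  | out (ch : Chan)

def Act.dual : Act → Act
  | inp ch => out ch
  | out ch => inp ch

def Act.IsOut : Act → Prop
  | inp _ => False
  | out _ => True

inductive State
  | zero | client | server | waiting

open Chan Act State

inductive Tr : State → Option Act → State → Prop
  | client_out_a : Tr client (some (out a)) zero
  | client_out_b : Tr client (some (out b)) waiting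
  | server_inp_a : Tr server (some (inp a)) zero
  | server_inp_b : Tr server (some (inp b)) zero
  | waiting_inp_c : Tr waiting (some (inp c)) zero

def lts : CLTS where
  U := State
  Act := Act
  isOut := Act.IsOut
  dual := Act.dual
  dual_dual := by rintro (_ | _) <;> rfl
  dual_flip := by rintro (_ | _) <;> simp [Act.IsOut, Act.dual]
  tr := Tr
  zero := zero
  zero_no_trans := by rintro _ _ ⟨⟩
  no_trans_eq_zero := by
    rintro (_ | _ | _ | _) h
    · rfl
    · exact (h _ _ .client_out_a).elim
    · exact (h _ _ .server_inp_a).elim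
    · exact (h _ _ .waiting_inp_c).elim

end MayCounterexample

open MayCounterexample in
/-- may-testing compliance is not in general a post-compliance relation. -/
theorem may_not_post_compliance :
    ∃ (M : CLTS) (p q : M.U), M.May p q ∧ (p, q) ∉ M.F M.mayRel := by
  refine ⟨lts, State.client, State.server, ?_, ?_⟩
  · exact CLTS.may_of_step (q' := State.zero) (.inr (.inr ⟨.out .a, .client_out_a, .server_inp_a⟩))
  · have hstuck : lts.Stuck (State.waiting, State.zero) :=
      CLTS.stuck_of_no_tau_of_right_zero (M := lts) (by rintro _ ⟨⟩)
    exact CLTS.not_mem_F_mayRel_of_step (c' := (State.waiting, State.zero)) nofun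
      (.inr (.inr ⟨.out .b, .client_out_b, .server_inp_b⟩)) (hstuck.not_may nofun)
end

section
/- Every fix-compliance relation lies between must-testing compliance and progress: if x ⊆ U × U satisfies F(x) = x, then ⊣mst ⊆ x ⊆ ⊣pg. -/
/-- every fix-compliance relation lies between must and progress. -/
theorem fix_compliance_between (M : CLTS) (x : Set (M.U × M.U)) (hx : M.F x = x) :
    M.mstRel ⊆ x ∧ x ⊆ M.pgRel := by
  classical
  have hS : M.Succ ⊆ x := by rw [← hx]; exact Set.subset_union_left
  have hclosed : ∀ c ∈ x, ∀ c', M.Step c c' → c' ∈ x := by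
    intro c hc c' hstep
    rw [← hx] at hc
    rcases hc with hc | hc
    · rcases hstep with ⟨h, _⟩ | ⟨h1, _⟩ | ⟨a, h, _⟩
      · rw [hc] at h; exact absurd h (M.zero_no_trans _ _)
      · apply hS; show c'.1 = M.zero; rw [h1]; exact hc
      · rw [hc] at h; exact absurd h (M.zero_no_trans _ _)
    · exact hc.2 c' hstep
  constructor
  · intro c hc
    by_contra hcx
    let g : M.U × M.U → M.U × M.U := fun d =>
      if h : ∃ d', M.Step d d' ∧ d' ∉ x then h.choose else d
    let s : ℕ → M.U × M.U := fun n => g^[n] c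
    have hnot : ∀ n, s n ∉ x := by
      intro n
      induction n with
      | zero => exact hcx
      | succ n ih =>
        have heq : s (n+1) = g (s n) := Function.iterate_succ_apply' g n c
        rw [heq]
        by_cases h : ∃ d', M.Step (s n) d' ∧ d' ∉ x
        · simp only [g, dif_pos h]; exact h.choose_spec.2
        · simp only [g, dif_neg h]; exact ih
    have hprem : ∀ n, M.Step (s n) (s (n+1)) ∨ (M.Stuck (s n) ∧ s (n+1) = s n) := by
      intro n
      have hsn := hnot n
      have heq : s (n+1) = g (s n) := Function.iterate_succ_apply' g n c
      by_cases h : ∃ d', M.Step (s n) d' ∧ d' ∉ x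
      · left; rw [heq]; simp only [g, dif_pos h]; exact h.choose_spec.1
      · right
        have hstuck : M.Stuck (s n) := by
          by_contra hst
          apply hsn
          rw [← hx]
          exact Or.inr ⟨hst, fun d' hd' => by_contra fun hdx => h ⟨d', hd', hdx⟩⟩
        exact ⟨hstuck, by rw [heq]; simp only [g, dif_neg h]⟩
    have hmst : M.Mst c.1 c.2 := hc
    obtain ⟨i, hi⟩ := hmst s (by simp [s]) hprem
    exact hnot i (hS hi)
  · intro c hc
    intro p' q' hsteps hstuck
    have hmem : (p', q') ∈ x := by
      have hall : ∀ c', M.Steps (c.1, c.2) c' → c' ∈ x := by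
        intro c' h
        induction h with
        | refl => exact hc
        | tail _ hstep ih => exact hclosed _ ih _ hstep
      exact hall _ hsteps
    rw [← hx] at hmem
    rcases hmem with h | h
    · exact h
    · exact absurd hstuck h.1
end

section
/- Behavioural compliance is contained in progress, and must-testing compliance is contained in behavioural compliance: ⊣mst ⊆ ⊣beh ⊆ ⊣pg. -/
namespace CLTS

variable (M : CLTS)

lemma step_zero {c c' : M.U × M.U} (h : M.Step c c') (hz : c.1 = M.zero) :
    c'.1 = M.zero := by
  rcases h with ⟨h, _⟩ | ⟨h, _⟩ | ⟨a, h, _⟩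
  · exact absurd h (hz ▸ M.zero_no_trans _ _)
  · exact h.trans hz
  · exact absurd h (hz ▸ M.zero_no_trans _ _)

lemma mst_step {c c' : M.U × M.U} (h : M.Step c c') (hm : M.Mst c.1 c.2) :
    M.Mst c'.1 c'.2 ∨ c'.1 = M.zero := by
  by_cases hz : c'.1 = M.zero
  · exact Or.inr hz
  left
  intro s hs0 hstep
  have := hm (fun n => Nat.rec c (fun n _ => s n) n) rfl ?_
  · obtain ⟨i, hi⟩ := this
    match i with
    | 0 => exact absurd (M.step_zero h hi) hz
    | j + 1 => exact ⟨j, hi⟩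
  · intro n
    match n with
    | 0 => exact Or.inl (show M.Step c (s 0) by rw [hs0]; exact h)
    | j + 1 => exact hstep j

lemma mst_steps {c c' : M.U × M.U} (h : M.Steps c c') (hm : M.Mst c.1 c.2) :
    M.Mst c'.1 c'.2 ∨ c'.1 = M.zero := by
  induction h with
  | refl => exact Or.inl hm
  | tail hab hbc ih =>
    rcases ih with ih | ih
    · exact M.mst_step hbc ih
    · exact Or.inr (M.step_zero hbc ih)

end CLTS

/-- must ⊆ behavioural ⊆ progress. -/
theorem mst_subset_beh_subset_pg (M : CLTS) :
    M.mstRel ⊆ M.behRel ∧ M.behRel ⊆ M.pgRel := by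
  constructor
  · rintro ⟨p, q⟩ hm p' q' hsteps
    rcases M.mst_steps hsteps hm with hm' | hz
    · constructor
      · intro hstuck
        obtain ⟨i, hi⟩ := hm' (fun _ => (p', q')) rfl
          (fun n => Or.inr ⟨hstuck, rfl⟩)
        exact hi
      · rintro ⟨t, ht0, htstep⟩
        obtain ⟨i, hi⟩ := hm' (fun n => (p', t n)) (by simp [ht0])
          (fun n => Or.inl (Or.inr (Or.inl ⟨rfl, htstep n⟩)))
        exact hi ▸ Relation.ReflTransGen.refl
    · exact ⟨fun _ => hz, fun _ => hz ▸ Relation.ReflTransGen.refl⟩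
  · rintro ⟨p, q⟩ hb p' q' hsteps hstuck
    exact (hb p' q' hsteps).1 hstuck
end

section
/- I/O compliance enjoys the progress property: ⊣io ⊆ ⊣pg, i.e. if p ⊣io q then every pair (p',q') with (p,q) ⇒* (p',q') that is stuck has p' = 0. -/
/-- I/O compliance enjoys the progress property. -/
theorem io_subset_pg (M : CLTS) :
    ∀ p q : M.U, M.Io p q →
      ∀ p' q' : M.U, M.Steps (p, q) (p', q') → M.Stuck (p', q') → p' = M.zero := by
  intro p q hio p' q' hsteps hstuck
  -- p' has no τ-transition
  have hpτ : ∀ p'', ¬ M.tr p' none p'' := fun p'' h =>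
    hstuck (p'', q') (Or.inl ⟨h, rfl⟩)
  have hqτ : ∀ q'', ¬ M.tr q' none q'' := fun q'' h =>
    hstuck (p', q'') (Or.inr (Or.inl ⟨rfl, h⟩))
  have hsync : ∀ a p'' q'', M.tr p' (some a) p'' → M.tr q' (some (M.dual a)) q'' → False :=
    fun a p'' q'' h1 h2 => hstuck (p'', q'') (Or.inr (Or.inr ⟨a, h1, h2⟩))
  -- weak barbs collapse to direct transitions
  have hbarbP : ∀ a, M.WBarb p' a → ∃ p'', M.tr p' (some a) p'' := by
    intro a ⟨p₁, p₂, hts, htr⟩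
    cases (Relation.ReflTransGen.cases_head hts) with
    | inl h => exact ⟨p₂, h ▸ htr⟩
    | inr h => exact absurd h.choose_spec.1 (hpτ _)
  have hbarbQ : ∀ a, M.WBarb q' a → ∃ q'', M.tr q' (some a) q'' := by
    intro a ⟨q₁, q₂, hts, htr⟩
    cases (Relation.ReflTransGen.cases_head hts) with
    | inl h => exact ⟨q₂, h ▸ htr⟩
    | inr h => exact absurd h.choose_spec.1 (hqτ _)
  have hio' := hio p' q' hsteps
  -- p' has no output barbs
  have hnoOut : ¬ ∃ a, M.isOut a ∧ M.WBarb p' a := by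
    rintro ⟨a, haOut, hbarb⟩
    obtain ⟨q'', hq⟩ := hbarbQ _ (hio'.1 a haOut hbarb)
    obtain ⟨p'', hp⟩ := hbarbP _ hbarb
    exact hsync a p'' q'' hp hq
  by_contra hne
  -- p' has some transition, necessarily a visible input
  obtain ⟨l, p'', hl⟩ : ∃ l p'', M.tr p' l p'' := by
    by_contra h; push_neg at h; exact hne (M.no_trans_eq_zero p' h)
  obtain ⟨a⟩ : ∃ a, l = some a := by
    cases l with
    | none => exact absurd hl (hpτ _)
    | some a => exact ⟨a, rfl⟩
  subst ‹l = some a›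
  have haIn : ¬ M.isOut a := fun h =>
    hnoOut ⟨a, h, p', p'', Relation.ReflTransGen.refl, hl⟩
  obtain ⟨⟨b, hbOut, hbbarb⟩, hback⟩ :=
    hio'.2 ⟨hnoOut, a, haIn, p', p'', Relation.ReflTransGen.refl, hl⟩
  obtain ⟨q'', hq⟩ := hbarbQ _ hbbarb
  obtain ⟨p₃, hp3⟩ := hbarbP _ (hback b hbOut hbbarb)
  have : M.tr q' (some (M.dual (M.dual b))) q'' := by rw [M.dual_dual]; exact hq
  exact hsync (M.dual b) p₃ q'' hp3 this
end
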